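/- arXiv:2509.17067 — 2 statements merged into one kernel-verified Lean document; each statement's English description precedes it below -/
import Mathlib

section
/- Tail-moment bound for the sample maximum: assume E[X⁻] < ∞, the upper quantile function g(p) = inf{r : P(X ≥ r) < p} is slowly varying at 0 with g(p) → +∞ as p → 0+. Then for every integer q ≥ 1 and every s > 0 there exists N such that for all n ≥ N and all α > 2^q, P(|M_n|^q ≥ α · g(1/n)^q) ≤ (α^{1/q}/2)^{−s} + (E[X⁻]/α^{1/q})^s. -/
/-!
Put `λ = α^{1/q}` and `c = λ g(1/n)`. The event `|Mₙ| ≥ c` forces either some `X_k ≥ c` or all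
`X_k ≤ -c`. Slow variation gives a Potter-type bound `g(2^{-sj}/n) ≤ (3/2)^j g(1/n)` for all `j`
once `n` is large; with `2^j ≤ λ < 2^{j+1}` this puts `c` above the quantile at level
`(2^j)^{-s}/n`, so the union bound gives `n P(X ≥ c) ≤ (λ/2)^{-s}`. By independence and Markov's
inequality for `X⁻`, `P(all X_k ≤ -c) = P(X ≤ -c)^n ≤ (E[X⁻]/λ)^n ≤ (E[X⁻]/λ)^s` once `n ≥ s`.
-/

open MeasureTheory ProbabilityTheory Filter

/-- Upper quantile function of a distribution `ν` on `ℝ`: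
`g p = inf {r : P(X ≥ r) < p}`. -/
noncomputable def upperQuantile (ν : MeasureTheory.Measure ℝ) (p : ℝ) : ℝ :=
  sInf {r : ℝ | (ν (Set.Ici r)).toReal < p}

/-- A function `g` is slowly varying at `0`. -/
def SlowlyVaryingAtZero (g : ℝ → ℝ) : Prop :=
  ∀ x > 0, Tendsto (fun t => g (t * x) / g t) (nhdsWithin 0 (Set.Ioi 0)) (nhds 1)

open Set Topology

lemma tendsto_measure_Ici_atTop (ν : Measure ℝ) [IsFiniteMeasure ν] :
    Tendsto (fun r => ν (Ici r)) atTop (𝓝 0) := by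
  have hempty : ⋂ r : ℝ, Ici r = ∅ :=
    eq_empty_of_forall_notMem fun x hx => by linarith [mem_Ici.1 (mem_iInter.1 hx (x + 1))]
  have := tendsto_measure_iInter_atTop (μ := ν) (fun r => measurableSet_Ici.nullMeasurableSet)
    (fun _ _ h => Ici_subset_Ici.2 h) ⟨0, measure_ne_top ν _⟩
  rwa [hempty, measure_empty] at this

lemma measureReal_Ici_lt_of_upperQuantile_lt {ν : Measure ℝ} [IsFiniteMeasure ν] {p r : ℝ}
    (hp : 0 < p) (h : upperQuantile ν p < r) : ν.real (Ici r) < p := by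
  have hne : {r : ℝ | ν.real (Ici r) < p}.Nonempty := by
    obtain ⟨r, hr⟩ := ((tendsto_measure_Ici_atTop ν).eventually_lt_const
      (ENNReal.ofReal_pos.2 hp)).exists
    exact ⟨r, ENNReal.toReal_lt_of_lt_ofReal hr⟩
  obtain ⟨r', hr', hr'r⟩ := exists_lt_of_csInf_lt hne h
  exact (measureReal_mono (Ici_subset_Ici.2 hr'r.le)).trans_lt hr'

lemma SlowlyVaryingAtZero.eventually_forall_apply_mul_pow_le {g : ℝ → ℝ}
    (hg : SlowlyVaryingAtZero g) (hpos : ∀ᶠ t in 𝓝[>] 0, 0 < g t) {x K : ℝ} (hx₀ : 0 < x)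
    (hx₁ : x ≤ 1) (hK : 1 < K) : ∀ᶠ t in 𝓝[>] 0, ∀ j : ℕ, g (t * x ^ j) ≤ K ^ j * g t := by
  have hstep : ∀ᶠ t in 𝓝[>] 0, g (t * x) ≤ K * g t := by
    filter_upwards [(hg x hx₀).eventually_le_const hK, hpos] with t hratio ht
    exact (div_le_iff₀ ht).1 hratio
  obtain ⟨δ, hδ, hsub⟩ := mem_nhdsGT_iff_exists_Ioo_subset.1 hstep
  filter_upwards [Ioo_mem_nhdsGT hδ] with t ht j
  induction j with
  | zero => simp
  | succ j ih =>
    have hmem : t * x ^ j ∈ Ioo 0 δ :=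
      ⟨by have := ht.1; positivity,
        (mul_le_of_le_one_right ht.1.le (pow_le_one₀ hx₀.le hx₁)).trans_lt ht.2⟩
    calc g (t * x ^ (j + 1)) = g (t * x ^ j * x) := by rw [pow_succ, mul_assoc]
      _ ≤ K * g (t * x ^ j) := hsub hmem
      _ ≤ K * (K ^ j * g t) := by gcongr
      _ = K ^ (j + 1) * g t := by ring

lemma measureReal_Ici_le_of_forall_upperQuantile_le {ν : Measure ℝ} [IsFiniteMeasure ν]
    {p G K s lam : ℝ} (hp : 0 < p) (hs : 0 ≤ s) (hG : 0 < G) (hK₀ : 0 ≤ K) (hK₂ : K < 2)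
    (h2 : 2 ≤ lam)
    (hg : ∀ j : ℕ, upperQuantile ν (p * ((2 : ℝ) ^ (-s)) ^ j) ≤ K ^ j * G) :
    ν.real (Ici (lam * G)) ≤ p * (lam / 2) ^ (-s) := by
  obtain ⟨j, hj, hj'⟩ := exists_nat_pow_near (by linarith : (1 : ℝ) ≤ lam) one_lt_two
  have hj₀ : j ≠ 0 := by rintro rfl; norm_num at hj'; linarith
  -- `K < 2` makes this strict, as `measureReal_Ici_lt_of_upperQuantile_lt` requires.
  have hlt : upperQuantile ν (p * ((2 : ℝ) ^ (-s)) ^ j) < lam * G :=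
    calc _ ≤ K ^ j * G := hg j
      _ < 2 ^ j * G := by gcongr
      _ ≤ lam * G := by gcongr
  calc ν.real (Ici (lam * G)) ≤ p * ((2 : ℝ) ^ j) ^ (-s) := by
        rw [← Real.rpow_pow_comm zero_le_two]
        exact (measureReal_Ici_lt_of_upperQuantile_lt (by positivity) hlt).le
    _ ≤ p * (lam / 2) ^ (-s) := by
        gcongr p * ?_
        refine Real.rpow_le_rpow_of_nonpos (by positivity) ?_ (neg_nonpos.2 hs)
        rw [pow_succ] at hj'
        linarith

lemma measureReal_Iic_neg_le_integral_div {ν : Measure ℝ} [IsFiniteMeasure ν]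
    (hneg : Integrable (fun x => max (-x) 0) ν) {c : ℝ} (hc : 0 < c) :
    ν.real (Iic (-c)) ≤ (∫ x, max (-x) 0 ∂ν) / c := by
  rw [le_div_iff₀ hc, mul_comm]
  calc c * ν.real (Iic (-c)) ≤ c * ν.real {x | c ≤ max (-x) 0} := by
        gcongr c * ?_
        exact measureReal_mono fun x (hx : x ≤ -c) => show c ≤ max (-x) 0 from
          (le_neg.1 hx).trans (le_max_left _ _)
    _ ≤ ∫ x, max (-x) 0 ∂ν :=
        mul_meas_ge_le_integral_of_nonneg (ae_of_all _ fun x => le_max_right _ _) hneg c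

lemma pow_le_rpow_of_le_of_le_one {p x s : ℝ} {n : ℕ} (hp₀ : 0 ≤ p) (hp₁ : p ≤ 1) (hpx : p ≤ x)
    (hs : 0 ≤ s) (hsn : s ≤ n) : p ^ n ≤ x ^ s := by
  rw [← Real.rpow_natCast]
  exact (Real.rpow_le_rpow_of_exponent_ge' hp₀ hp₁ hs hsn).trans (Real.rpow_le_rpow hp₀ hpx hs)

lemma exists_le_or_forall_le_neg_of_le_abs_ciSup {ι : Type*} [Finite ι] [Nonempty ι] {f : ι → ℝ}
    {c : ℝ} (h : c ≤ |⨆ i, f i|) : (∃ i, c ≤ f i) ∨ ∀ i, f i ≤ -c := by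
  rcases le_abs.1 h with hsup | hsup
  · obtain ⟨i, hi⟩ := exists_eq_ciSup_of_finite (f := f)
    exact .inl ⟨i, hi ▸ hsup⟩
  · exact .inr fun i => (le_ciSup (Finite.bddAbove_range f) i).trans (le_neg.1 hsup)

lemma measureReal_le_abs_iSup_le {Ω ι : Type*} [MeasurableSpace Ω] {μ : Measure Ω}
    [IsFiniteMeasure μ] {ν : Measure ℝ} [Fintype ι] [Nonempty ι] {Y : ι → Ω → ℝ}
    (hmeas : ∀ i, Measurable (Y i)) (hindep : iIndepFun Y μ) (hlaw : ∀ i, μ.map (Y i) = ν)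
    (c : ℝ) :
    μ.real {ω | c ≤ |⨆ i, Y i ω|} ≤
      Fintype.card ι * ν.real (Ici c) + ν.real (Iic (-c)) ^ Fintype.card ι := by
  have hlaw' : ∀ i {A : Set ℝ}, MeasurableSet A → μ.real (Y i ⁻¹' A) = ν.real A :=
    fun i A hA => by rw [← hlaw i, map_measureReal_apply (hmeas i) hA]
  have hsub : {ω | c ≤ |⨆ i, Y i ω|} ⊆ (⋃ i, Y i ⁻¹' Ici c) ∪ ⋂ i, Y i ⁻¹' Iic (-c) := by
    intro ω hω
    simpa using exists_le_or_forall_le_neg_of_le_abs_ciSup hω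
  have hinter : μ.real (⋂ i, Y i ⁻¹' Iic (-c)) = ν.real (Iic (-c)) ^ Fintype.card ι := by
    rw [measureReal_def, hindep.meas_iInter fun i => ⟨_, measurableSet_Iic, rfl⟩,
      ENNReal.toReal_prod]
    simp_rw [← measureReal_def, hlaw' _ measurableSet_Iic, Finset.prod_const, Finset.card_univ]
  calc μ.real {ω | c ≤ |⨆ i, Y i ω|}
      ≤ μ.real (⋃ i, Y i ⁻¹' Ici c) + μ.real (⋂ i, Y i ⁻¹' Iic (-c)) :=
        (measureReal_mono hsub).trans (measureReal_union_le _ _)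
    _ ≤ ∑ i, μ.real (Y i ⁻¹' Ici c) + μ.real (⋂ i, Y i ⁻¹' Iic (-c)) := by
        gcongr; exact measureReal_iUnion_fintype_le _
    _ = _ := by simp [hlaw' _ measurableSet_Ici, hinter]

lemma mul_pow_le_pow_iff_rpow_one_div_mul_le {α G y : ℝ} {q : ℕ} (hα : 0 ≤ α) (hG : 0 ≤ G)
    (hy : 0 ≤ y) (hq : q ≠ 0) : α * G ^ q ≤ y ^ q ↔ α ^ ((1 : ℝ) / q) * G ≤ y := by
  conv_lhs => rw [← Real.rpow_inv_natCast_pow hα hq, ← mul_pow]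
  rw [one_div]
  exact pow_le_pow_iff_left₀ (by positivity) hy hq

lemma measureReal_mul_le_abs_iSup_le {Ω ι : Type*} [MeasurableSpace Ω] {μ : Measure Ω}
    [IsFiniteMeasure μ] {ν : Measure ℝ} [IsProbabilityMeasure ν] [Fintype ι] [Nonempty ι]
    {Y : ι → Ω → ℝ} (hmeas : ∀ i, Measurable (Y i)) (hindep : iIndepFun Y μ)
    (hlaw : ∀ i, μ.map (Y i) = ν) (hneg : Integrable (fun x => max (-x) 0) ν)
    {s lam G K : ℝ} (hs : 0 ≤ s) (hsn : s ≤ Fintype.card ι) (hlam : 2 ≤ lam) (hG : 1 ≤ G)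
    (hK₀ : 0 ≤ K) (hK₂ : K < 2)
    (hg : ∀ j : ℕ, upperQuantile ν (1 / Fintype.card ι * ((2 : ℝ) ^ (-s)) ^ j) ≤ K ^ j * G) :
    μ.real {ω | lam * G ≤ |⨆ i, Y i ω|} ≤
      (lam / 2) ^ (-s) + ((∫ x, max (-x) 0 ∂ν) / lam) ^ s := by
  set n := Fintype.card ι
  have hn₀ : (0 : ℝ) < n := by simp [n, Fintype.card_pos]
  have hc : 0 < lam * G := by nlinarith
  have hupper := measureReal_Ici_le_of_forall_upperQuantile_le (by positivity) hs
    (by linarith) hK₀ hK₂ hlam hg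
  have hlower : ν.real (Iic (-(lam * G))) ≤ (∫ x, max (-x) 0 ∂ν) / lam :=
    (measureReal_Iic_neg_le_integral_div hneg hc).trans <| div_le_div_of_nonneg_left
      (integral_nonneg fun x => le_max_right _ _) (by linarith)
      (le_mul_of_one_le_right (by linarith) hG)
  refine (measureReal_le_abs_iSup_le hmeas hindep hlaw _).trans (add_le_add ?_ ?_)
  · calc (n : ℝ) * ν.real (Ici (lam * G)) ≤ n * (1 / n * (lam / 2) ^ (-s)) := by gcongr
      _ = (lam / 2) ^ (-s) := by field_simp
  · exact pow_le_rpow_of_le_of_le_one measureReal_nonneg measureReal_le_one hlower hs hsn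

/-- Tail-moment bound for the sample maximum: if `E[X⁻] < ∞` and the upper
quantile function `g` is slowly varying at `0` with `g(0+) = +∞`, then for any
`q ≥ 1` and `s > 0`, for all large `n` and all `α > 2^q`,
`P(|Mₙ|^q ≥ α g(1/n)^q) ≤ (α^{1/q}/2)^{-s} + (E[X⁻]/α^{1/q})^s`. -/
theorem sampleMax_tail_moment_bound
    {Ω : Type*} [MeasurableSpace Ω] (μ : Measure Ω) [IsProbabilityMeasure μ]
    (ν : Measure ℝ) [IsProbabilityMeasure ν]
    (X : ℕ → Ω → ℝ) (hmeas : ∀ k, Measurable (X k))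
    (hindep : iIndepFun X μ)
    (hlaw : ∀ k, Measure.map (X k) μ = ν)
    (hneg : Integrable (fun x => max (-x) 0) ν)
    (hsv : SlowlyVaryingAtZero (upperQuantile ν))
    (hinfty : Tendsto (upperQuantile ν) (nhdsWithin 0 (Set.Ioi 0)) atTop) :
    ∀ q : ℕ, 1 ≤ q → ∀ s > (0 : ℝ), ∃ N : ℕ, ∀ n ≥ N, ∀ α : ℝ, (2 : ℝ) ^ q < α →
      (μ {ω | α * upperQuantile ν (1 / n) ^ q ≤ |⨆ k : Fin n, X k ω| ^ q}).toReal ≤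
        (α ^ ((1 : ℝ) / q) / 2) ^ (-s) +
          ((∫ x, max (-x) 0 ∂ν) / α ^ ((1 : ℝ) / q)) ^ s := by
  intro q hq s hs
  have hpotter := hsv.eventually_forall_apply_mul_pow_le (hinfty.eventually_gt_atTop 0)
    (Real.rpow_pos_of_pos two_pos (-s)) (Real.rpow_le_one_of_one_le_of_nonpos one_le_two
      (neg_nonpos.2 hs.le)) (by norm_num : (1 : ℝ) < 3 / 2)
  have hinv : Tendsto (fun n : ℕ => 1 / (n : ℝ)) atTop (𝓝[>] 0) := by
    simpa only [one_div, Function.comp_def] using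
      tendsto_inv_atTop_nhdsGT_zero.comp tendsto_natCast_atTop_atTop
  obtain ⟨N, hN⟩ := eventually_atTop.1 <|
    (hinv.eventually (hpotter.and (hinfty.eventually_ge_atTop 1))).and
      (tendsto_natCast_atTop_atTop.eventually_ge_atTop s)
  refine ⟨N, fun n hn α hα => ?_⟩
  obtain ⟨⟨hg, hG⟩, hsn⟩ := hN n hn
  have : NeZero n := ⟨by exact_mod_cast (hs.trans_le hsn).ne'⟩
  have hα₀ : 0 < α := lt_trans (by positivity) hα
  have hlam : 2 < α ^ ((1 : ℝ) / q) := by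
    rw [one_div, Real.lt_rpow_inv_iff_of_pos zero_le_two hα₀.le (by positivity),
      Real.rpow_natCast]
    exact hα
  have hevent : {ω | α * upperQuantile ν (1 / n) ^ q ≤ |⨆ k : Fin n, X k ω| ^ q} =
      {ω | α ^ ((1 : ℝ) / q) * upperQuantile ν (1 / n) ≤ |⨆ k : Fin n, X k ω|} :=
    Set.ext fun ω => mul_pow_le_pow_iff_rpow_one_div_mul_le hα₀.le (by linarith) (abs_nonneg _)
      (by omega)
  change μ.real _ ≤ _
  rw [hevent]
  simpa using measureReal_mul_le_abs_iSup_le (K := 3 / 2) (fun k : Fin n => hmeas k)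
    (hindep.precomp Fin.val_injective) (fun k => hlaw k) hneg hs.le (by simpa using hsn)
    hlam.le hG (by norm_num) (by norm_num) (by simpa using hg)
end

section
/- Uniform second-moment bound: under the assumptions E[X⁻] < ∞, g slowly varying at 0, and g(p) → ∞ as p → 0+, there exist a constant C and N such that for all n ≥ N, Var(M_n) ≤ E[M_n²] ≤ C · g(1/n)², where M_n is the maximum of n i.i.d. copies of X. -/
open MeasureTheory ProbabilityTheory Filter

open Set
open scoped ENNReal

/-!
Write `M = max_{k<n} X_k` and `g = upperQuantile ν`. Slow variation gives `g (t / 2) ≤ 5/4 · g t`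
for small `t`, hence `g (2⁻ᵏ / n) ≤ (5/4)ᵏ · g (1/n)`, and a union bound turns this into
`P(M ≥ (5/4)ᵏ g(1/n)) ≤ 2⁻ᵏ`. On the other side, independence and Markov's inequality for `X⁻`
give `P(M ≤ -t) ≤ (E[X⁻] / t)ⁿ`. So both tails of `M²` decay geometrically along geometric
sequences of thresholds, at the scales `g(1/n)²` and `E[X⁻]²`, and the layer-cake formula bounds
`E[M²]` by two geometric series. Since `g(1/n) → ∞`, the second scale is absorbed into the first.
-/

theorem exists_nat_mem_Ioc_pow {x y : ℝ} (hx : 1 < x) (hy : 1 < y) :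
    ∃ n : ℕ, x ∈ Ioc (y ^ n) (y ^ (n + 1)) := by
  obtain ⟨n, hn⟩ := exists_mem_Ioc_zpow (zero_lt_one.trans hx) hy
  lift n to ℕ
  · rw [← Int.lt_add_one_iff, ← zpow_lt_zpow_iff_right₀ hy, zpow_zero]
    exact hx.trans_le hn.2
  exact ⟨n, by exact_mod_cast hn⟩

theorem lintegral_Ioi_le_of_geometric_tail {F : ℝ → ℝ≥0∞} {b r q : ℝ} (hb : 0 < b) (hr : 1 < r)
    (hq : 0 ≤ q) (hqr : q * r < 1) (hF : ∀ s, F s ≤ 1)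
    (htail : ∀ (k : ℕ) (s : ℝ), b * r ^ k < s → F s ≤ ENNReal.ofReal (q ^ k)) :
    ∫⁻ s in Ioi 0, F s ≤ ENNReal.ofReal (b * r * (1 - q) / (1 - q * r)) := by
  have hcover : Ioi 0 ⊆ Ioc 0 b ∪ ⋃ k : ℕ, Ioc (b * r ^ k) (b * r ^ (k + 1)) := by
    intro s (hs : 0 < s)
    rcases le_or_gt s b with hsb | hsb
    · exact Or.inl ⟨hs, hsb⟩
    obtain ⟨k, hk₁, hk₂⟩ := exists_nat_mem_Ioc_pow ((one_lt_div hb).2 hsb) hr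
    exact Or.inr (mem_iUnion.2 ⟨k, (lt_div_iff₀' hb).1 hk₁, (div_le_iff₀' hb).1 hk₂⟩)
  have hpiece (k : ℕ) : ∫⁻ s in Ioc (b * r ^ k) (b * r ^ (k + 1)), F s ≤
      ENNReal.ofReal (b * (r - 1)) * ENNReal.ofReal (q * r) ^ k := calc
    _ ≤ ∫⁻ _ in Ioc (b * r ^ k) (b * r ^ (k + 1)), ENNReal.ofReal (q ^ k) :=
      setLIntegral_mono measurable_const fun s hs => htail k s hs.1
    _ = ENNReal.ofReal (q ^ k * (b * r ^ (k + 1) - b * r ^ k)) := by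
      rw [setLIntegral_const, Real.volume_Ioc, ENNReal.ofReal_mul (by positivity)]
    _ = _ := by
      rw [← ENNReal.ofReal_pow (by positivity), ← ENNReal.ofReal_mul (by nlinarith)]
      ring_nf
  have hhead : ∫⁻ s in Ioc 0 b, F s ≤ ENNReal.ofReal b := calc
    _ ≤ ∫⁻ _ in Ioc 0 b, 1 := setLIntegral_mono measurable_const fun s _ => hF s
    _ = ENNReal.ofReal b := by simp
  calc ∫⁻ s in Ioi 0, F s
      ≤ ∫⁻ s in Ioc 0 b ∪ ⋃ k : ℕ, Ioc (b * r ^ k) (b * r ^ (k + 1)), F s :=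
        lintegral_mono_set hcover
    _ ≤ (∫⁻ s in Ioc 0 b, F s) + ∑' k : ℕ, ∫⁻ s in Ioc (b * r ^ k) (b * r ^ (k + 1)), F s :=
        (lintegral_union_le _ _ _).trans (add_le_add le_rfl (lintegral_iUnion_le _ _))
    _ ≤ ENNReal.ofReal b + ∑' k : ℕ, ENNReal.ofReal (b * (r - 1)) * ENNReal.ofReal (q * r) ^ k :=
        add_le_add hhead (ENNReal.tsum_le_tsum hpiece)
    _ = ENNReal.ofReal (b * r * (1 - q) / (1 - q * r)) := by
      have hqr' : 0 < 1 - q * r := by linarith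
      rw [ENNReal.tsum_mul_left, ENNReal.tsum_geometric, ← ENNReal.ofReal_one,
        ← ENNReal.ofReal_sub _ (by positivity), ← ENNReal.ofReal_inv_of_pos (by linarith),
        ← ENNReal.ofReal_mul (by nlinarith), ← ENNReal.ofReal_add hb.le (by positivity)]
      congr 1
      rw [eq_div_iff hqr'.ne']
      linear_combination b * (r - 1) * mul_inv_cancel₀ hqr'.ne'

theorem measure_Ici_lt_of_upperQuantile_lt {ν : Measure ℝ} [IsFiniteMeasure ν] {p u : ℝ}
    (hp : 0 < p) (hu : upperQuantile ν p < u) : ν (Ici u) < ENNReal.ofReal p := by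
  have htail : Tendsto (fun r => ν (Ici r)) atTop (nhds 0) := by
    have := tendsto_measure_iInter_atTop (μ := ν)
      (fun r : ℝ => measurableSet_Ici.nullMeasurableSet) antitone_Ici ⟨0, measure_ne_top ν _⟩
    have hempty : ⋂ r : ℝ, Ici r = ∅ :=
      eq_empty_of_forall_notMem fun x hx => (lt_add_one x).not_ge (mem_iInter.1 hx (x + 1))
    rwa [hempty, measure_empty] at this
  obtain ⟨r, hr⟩ := (htail.eventually (gt_mem_nhds (ENNReal.ofReal_pos.2 hp))).exists
  obtain ⟨s, hs, hsu⟩ := exists_lt_of_csInf_lt (s := {r : ℝ | (ν (Ici r)).toReal < p})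
    ⟨r, ENNReal.toReal_lt_of_lt_ofReal hr⟩ hu
  calc ν (Ici u) ≤ ν (Ici s) := measure_mono (Ici_subset_Ici.2 hsu.le)
    _ < ENNReal.ofReal p := (ENNReal.lt_ofReal_iff_toReal_lt (measure_ne_top ν _)).2 hs

theorem SlowlyVaryingAtZero.eventually_le_mul {g : ℝ → ℝ} (hg : SlowlyVaryingAtZero g)
    (hpos : ∀ᶠ t in nhdsWithin 0 (Ioi 0), 0 < g t) {x c : ℝ} (hx : 0 < x) (hc : 1 < c) :
    ∀ᶠ t in nhdsWithin 0 (Ioi 0), g (t * x) ≤ c * g t := by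
  filter_upwards [(hg x hx).eventually (eventually_le_nhds hc), hpos] with t hratio hgt
  rwa [div_le_iff₀ hgt] at hratio

theorem le_pow_mul_of_forall_mem_Ioc {g : ℝ → ℝ} {t₀ x c : ℝ} (hx₀ : 0 < x) (hx₁ : x ≤ 1)
    (hc : 0 ≤ c) (h : ∀ t ∈ Ioc 0 t₀, g (t * x) ≤ c * g t) (k : ℕ) {t : ℝ}
    (ht : t ∈ Ioc 0 t₀) : g (t * x ^ k) ≤ c ^ k * g t := by
  induction k with
  | zero => simp
  | succ k ih =>
    have hmem : t * x ^ k ∈ Ioc 0 t₀ := ⟨mul_pos ht.1 (pow_pos hx₀ k),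
      (mul_le_of_le_one_right ht.1.le (pow_le_one₀ hx₀.le hx₁)).trans ht.2⟩
    calc g (t * x ^ (k + 1)) = g (t * x ^ k * x) := by rw [pow_succ, mul_assoc]
      _ ≤ c * g (t * x ^ k) := h _ hmem
      _ ≤ c * (c ^ k * g t) := mul_le_mul_of_nonneg_left ih hc
      _ = c ^ (k + 1) * g t := by ring

theorem measure_Iic_neg_le_integral_div {ν : Measure ℝ} [IsFiniteMeasure ν]
    (hneg : Integrable (fun x => max (-x) 0) ν) {t : ℝ} (ht : 0 < t) :
    ν (Iic (-t)) ≤ ENNReal.ofReal ((∫ x, max (-x) 0 ∂ν) / t) := by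
  have hmarkov :=
    mul_meas_ge_le_integral_of_nonneg (ae_of_all ν fun x => le_max_right (-x) 0) hneg t
  have hsub : Iic (-t) ⊆ {x | t ≤ max (-x) 0} := fun x (hx : x ≤ -t) =>
    le_max_of_le_left (show t ≤ -x by linarith)
  rw [ENNReal.le_ofReal_iff_toReal_le (measure_ne_top ν _) (by positivity), le_div_iff₀ ht]
  calc (ν (Iic (-t))).toReal * t ≤ t * ν.real {x | t ≤ max (-x) 0} := by
        rw [mul_comm]; exact mul_le_mul_of_nonneg_left (measureReal_mono hsub) ht.le
    _ ≤ _ := hmarkov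

theorem lintegral_ofReal_sq_le_add_tails {Ω : Type*} [MeasurableSpace Ω] {μ : Measure Ω}
    {f : Ω → ℝ} (hf : AEMeasurable f μ) :
    ∫⁻ ω, ENNReal.ofReal (f ω ^ 2) ∂μ ≤
      (∫⁻ s in Ioi 0, μ {ω | √s ≤ f ω}) + ∫⁻ s in Ioi 0, μ {ω | f ω ≤ -√s} := by
  have hanti : Antitone fun s => μ {ω | √s ≤ f ω} := fun s s' hss =>
    measure_mono fun ω (hω : √s' ≤ f ω) => (Real.sqrt_le_sqrt hss).trans hω
  rw [lintegral_eq_lintegral_meas_le μ (ae_of_all μ fun ω => sq_nonneg _) (hf.pow_const 2),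
    ← lintegral_add_left hanti.measurable]
  refine lintegral_mono fun s => (measure_mono fun ω (hω : s ≤ f ω ^ 2) => ?_).trans
    (measure_union_le _ _)
  have : √s ≤ |f ω| := by simpa [Real.sqrt_sq_eq_abs] using Real.sqrt_le_sqrt hω
  rcases le_abs'.1 this with h | h
  · exact Or.inr (show f ω ≤ -√s by linarith)
  · exact Or.inl h

section SampleMax

variable {Ω : Type*} [MeasurableSpace Ω] {μ : Measure Ω} {ν : Measure ℝ} {X : ℕ → Ω → ℝ}

theorem measure_le_iSup_le_mul_measure_Ici (hmeas : ∀ k, Measurable (X k))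
    (hlaw : ∀ k, μ.map (X k) = ν) {n : ℕ} (hn : n ≠ 0) (t : ℝ) :
    μ {ω | t ≤ ⨆ k : Fin n, X k ω} ≤ n * ν (Ici t) := by
  have : Nonempty (Fin n) := ⟨⟨0, Nat.pos_of_ne_zero hn⟩⟩
  calc μ {ω | t ≤ ⨆ k : Fin n, X k ω} ≤ μ (⋃ k : Fin n, X k ⁻¹' Ici t) :=
        measure_mono fun ω hω => by
          obtain ⟨k, hk⟩ := exists_eq_ciSup_of_finite (f := fun k : Fin n => X k ω)
          exact mem_iUnion.2 ⟨k, show t ≤ X k ω from hk ▸ hω⟩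
    _ ≤ ∑ k : Fin n, μ (X k ⁻¹' Ici t) := measure_iUnion_fintype_le _ _
    _ = n * ν (Ici t) := by
      simp_rw [← Measure.map_apply (hmeas _) measurableSet_Ici, hlaw]
      simp

theorem measure_iSup_le_le_pow_measure_Iic (hmeas : ∀ k, Measurable (X k))
    (hindep : iIndepFun X μ) (hlaw : ∀ k, μ.map (X k) = ν) (n : ℕ) (t : ℝ) :
    μ {ω | ⨆ k : Fin n, X k ω ≤ t} ≤ ν (Iic t) ^ n := by
  calc μ {ω | ⨆ k : Fin n, X k ω ≤ t} ≤ μ (⋂ k ∈ Finset.range n, X k ⁻¹' Iic t) :=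
        measure_mono fun ω hω => mem_iInter₂.2 fun k hk => show X k ω ≤ t from
          (le_ciSup (f := fun k : Fin n => X k ω) (finite_range _).bddAbove
            ⟨k, Finset.mem_range.1 hk⟩).trans hω
    _ = ∏ k ∈ Finset.range n, μ (X k ⁻¹' Iic t) :=
        hindep.meas_biInter fun k _ => ⟨Iic t, measurableSet_Iic, rfl⟩
    _ = ν (Iic t) ^ n := by
      simp_rw [← Measure.map_apply (hmeas _) measurableSet_Iic, hlaw]
      simp

theorem lintegral_measure_sqrt_le_iSup_le [IsProbabilityMeasure μ] [IsFiniteMeasure ν]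
    (hmeas : ∀ k, Measurable (X k)) (hlaw : ∀ k, μ.map (X k) = ν) {n : ℕ} (hn : n ≠ 0)
    {a x c : ℝ} (ha : 0 < a) (hx : 0 < x) (hc : 1 < c) (hxc : x * c ^ 2 < 1)
    (hquant : ∀ k : ℕ, upperQuantile ν (x ^ k / n) ≤ c ^ k * a) :
    ∫⁻ s in Ioi 0, μ {ω | √s ≤ ⨆ k : Fin n, X k ω} ≤
      ENNReal.ofReal (a ^ 2 * c ^ 2 * (1 - x) / (1 - x * c ^ 2)) := by
  refine lintegral_Ioi_le_of_geometric_tail (by positivity) (one_lt_pow₀ hc two_ne_zero) hx.le hxc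
    (fun _ => prob_le_one) fun k s hs => ?_
  have hroot : c ^ k * a < √s :=
    Real.lt_sqrt_of_sq_lt (by rwa [mul_pow, ← pow_mul, mul_comm k, pow_mul, mul_comm])
  calc μ {ω | √s ≤ ⨆ k : Fin n, X k ω} ≤ n * ν (Ici √s) :=
        measure_le_iSup_le_mul_measure_Ici hmeas hlaw hn _
    _ ≤ n * ENNReal.ofReal (x ^ k / n) := by
      gcongr
      exact (measure_Ici_lt_of_upperQuantile_lt (by positivity) ((hquant k).trans_lt hroot)).le
    _ = ENNReal.ofReal (x ^ k) := by
      rw [← ENNReal.ofReal_natCast, ← ENNReal.ofReal_mul (by positivity),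
        mul_div_cancel₀ _ (by exact_mod_cast hn)]

theorem lintegral_measure_iSup_le_neg_sqrt_le [IsProbabilityMeasure μ] [IsFiniteMeasure ν]
    (hmeas : ∀ k, Measurable (X k)) (hindep : iIndepFun X μ) (hlaw : ∀ k, μ.map (X k) = ν)
    (hneg : Integrable (fun x => max (-x) 0) ν) {n : ℕ} (hn : 3 ≤ n) {m : ℝ}
    (hm : ∫ x, max (-x) 0 ∂ν < m) :
    ∫⁻ s in Ioi 0, μ {ω | ⨆ k : Fin n, X k ω ≤ -√s} ≤ ENNReal.ofReal (7 * m ^ 2) := by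
  have hm₀ : 0 < m := (integral_nonneg fun x => le_max_right (-x) 0).trans_lt hm
  refine (lintegral_Ioi_le_of_geometric_tail (b := m ^ 2) (r := 4) (q := 8⁻¹) (by positivity)
    (by norm_num) (by norm_num) (by norm_num) (fun _ => prob_le_one) fun k s hs => ?_).trans_eq
    (congrArg ENNReal.ofReal (by ring))
  have hroot : m * 2 ^ k < √s := Real.lt_sqrt_of_sq_lt (by
    rwa [mul_pow, ← pow_mul, mul_comm k, pow_mul, show (2 : ℝ) ^ 2 = 4 by norm_num])
  have hroot₀ : 0 < √s := (by positivity : 0 < m * 2 ^ k).trans hroot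
  have hmarkov : ν (Iic (-√s)) ≤ ENNReal.ofReal (2⁻¹ ^ k) := by
    refine (measure_Iic_neg_le_integral_div hneg hroot₀).trans (ENNReal.ofReal_le_ofReal ?_)
    rw [div_le_iff₀ hroot₀]
    calc ∫ x, max (-x) 0 ∂ν ≤ m := hm.le
      _ = 2⁻¹ ^ k * (m * 2 ^ k) := by rw [inv_pow]; field_simp
      _ ≤ 2⁻¹ ^ k * √s := by gcongr
  calc μ {ω | ⨆ k : Fin n, X k ω ≤ -√s} ≤ ν (Iic (-√s)) ^ n :=
        measure_iSup_le_le_pow_measure_Iic hmeas hindep hlaw n _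
    _ ≤ ENNReal.ofReal (2⁻¹ ^ k) ^ n := by gcongr
    _ ≤ ENNReal.ofReal (2⁻¹ ^ k) ^ 3 :=
      pow_le_pow_right_of_le_one'
        (ENNReal.ofReal_le_one.2 (pow_le_one₀ (by norm_num) (by norm_num))) hn
    _ = ENNReal.ofReal (8⁻¹ ^ k) := by
      rw [← ENNReal.ofReal_pow (by positivity), ← pow_mul, mul_comm, pow_mul]
      norm_num

end SampleMax

theorem integral_sq_le_of_lintegral_tails_le {Ω : Type*} [MeasurableSpace Ω] {μ : Measure Ω}
    {f : Ω → ℝ} (hf : AEMeasurable f μ) {A B : ℝ} (hA : 0 ≤ A) (hB : 0 ≤ B)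
    (hup : ∫⁻ s in Ioi 0, μ {ω | √s ≤ f ω} ≤ ENNReal.ofReal A)
    (hdown : ∫⁻ s in Ioi 0, μ {ω | f ω ≤ -√s} ≤ ENNReal.ofReal B) :
    ∫ ω, f ω ^ 2 ∂μ ≤ A + B := by
  rw [integral_eq_lintegral_of_nonneg_ae (ae_of_all μ fun ω => sq_nonneg _)
    (hf.pow_const 2).aestronglyMeasurable]
  refine ENNReal.toReal_le_of_le_ofReal (by positivity) ?_
  rw [ENNReal.ofReal_add hA hB]
  exact (lintegral_ofReal_sq_le_add_tails hf).trans (add_le_add hup hdown)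

/-- Uniform second-moment bound: under `E[X⁻] < ∞`, `g` slowly varying at `0` and
`g(0+) = +∞`, there exist `C` and `N` such that for all `n ≥ N`,
`Var(Mₙ) ≤ E[Mₙ²] ≤ C · g(1/n)²`. -/
theorem sampleMax_secondMoment_bound
    {Ω : Type*} [MeasurableSpace Ω] (μ : Measure Ω) [IsProbabilityMeasure μ]
    (ν : Measure ℝ) [IsProbabilityMeasure ν]
    (X : ℕ → Ω → ℝ) (hmeas : ∀ k, Measurable (X k))
    (hindep : iIndepFun X μ)
    (hlaw : ∀ k, Measure.map (X k) μ = ν)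
    (hneg : Integrable (fun x => max (-x) 0) ν)
    (hsv : SlowlyVaryingAtZero (upperQuantile ν))
    (hinfty : Tendsto (upperQuantile ν) (nhdsWithin 0 (Set.Ioi 0)) atTop) :
    ∃ C : ℝ, ∃ N : ℕ, ∀ n ≥ N,
      variance (fun ω => ⨆ k : Fin n, X k ω) μ ≤
        ∫ ω, (⨆ k : Fin n, X k ω) ^ 2 ∂μ ∧
      ∫ ω, (⨆ k : Fin n, X k ω) ^ 2 ∂μ ≤ C * upperQuantile ν (1 / n) ^ 2 := by
  set g := upperQuantile ν
  -- `5/4` and `1/2` are just some `c > 1` and `x < 1` with `x * c ^ 2 < 1`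
  obtain ⟨t₀, ht₀, hg⟩ : ∃ t₀ ∈ Ioi (0 : ℝ),
      Ioc 0 t₀ ⊆ {t | 1 ≤ g t ∧ g (t * 2⁻¹) ≤ 5 / 4 * g t} :=
    mem_nhdsGT_iff_exists_Ioc_subset.1 ((hinfty.eventually_ge_atTop 1).and
      (hsv.eventually_le_mul (hinfty.eventually_gt_atTop 0) (by norm_num) (by norm_num)))
  set m := ∫ x, max (-x) 0 ∂ν + 1
  refine ⟨25 / 7 + 7 * m ^ 2, max 3 ⌈t₀⁻¹⌉₊, fun n hn => ?_⟩
  have hM : Measurable fun ω => ⨆ k : Fin n, X k ω := .iSup fun k => hmeas k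
  refine ⟨variance_le_expectation_sq hM.aestronglyMeasurable, ?_⟩
  have hn₃ : 3 ≤ n := le_of_max_le_left hn
  have hnt : 1 / (n : ℝ) ∈ Ioc 0 t₀ := ⟨by positivity, by
    rw [one_div, inv_le_comm₀ (by positivity) ht₀]; exact Nat.ceil_le.1 (le_of_max_le_right hn)⟩
  have hg₁ : 1 ≤ g (1 / n) := (hg hnt).1
  have hquant (k : ℕ) : g (2⁻¹ ^ k / n) ≤ (5 / 4) ^ k * g (1 / n) := by
    have := le_pow_mul_of_forall_mem_Ioc (by norm_num) (by norm_num) (by norm_num)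
      (fun t ht => (hg ht).2) k hnt
    rwa [one_div_mul_eq_div] at this
  calc ∫ ω, (⨆ k : Fin n, X k ω) ^ 2 ∂μ ≤ 25 / 7 * g (1 / n) ^ 2 + 7 * m ^ 2 := by
        refine integral_sq_le_of_lintegral_tails_le hM.aemeasurable (by positivity) (by positivity)
          ?_ (lintegral_measure_iSup_le_neg_sqrt_le hmeas hindep hlaw hneg hn₃ (lt_add_one _))
        refine (lintegral_measure_sqrt_le_iSup_le hmeas hlaw (by omega) (by linarith)
          (by norm_num : (0 : ℝ) < 2⁻¹) (by norm_num : (1 : ℝ) < 5 / 4) (by norm_num)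
          hquant).trans_eq (congrArg ENNReal.ofReal ?_)
        norm_num
        ring
    _ ≤ (25 / 7 + 7 * m ^ 2) * g (1 / n) ^ 2 := by
        nlinarith [mul_le_mul_of_nonneg_left (one_le_pow₀ hg₁ : 1 ≤ g (1 / n) ^ 2) (sq_nonneg m)]
end
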